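/- Let 0 < α < π/4 and β = π/4, and define M̄ := exp(s_max·X_{++})·exp(s_max·X_{−+})·exp(s_max·X_{−−})·exp(s_max·X_{+−}). Then for every natural number n: M̄ⁿ·N = (0, sin(4n·θ(α)), cos(4n·θ(α))) and M̄ⁿ·exp(s_max·X_{++})·N = (0, sin((4n+1)·θ(α)), cos((4n+1)·θ(α))). -/

import Mathlib

open MeasureTheory Matrix Real

noncomputable section

/-- The generator of rotations around the `x₁`-axis. -/
def J1 : Matrix (Fin 3) (Fin 3) ℝ := !![0,0,0; 0,0,-1; 0,1,0]

/-- The generator of rotations around the `x₂`-axis. -/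
def J2 : Matrix (Fin 3) (Fin 3) ℝ := !![0,0,-1; 0,0,0; 1,0,0]

/-- The generator of rotations around the `x₃`-axis. -/
def J3 : Matrix (Fin 3) (Fin 3) ℝ := !![0,-1,0; 1,0,0; 0,0,0]

/-- The drift field `F = cos α · J₃` of the normalized Bloch-sphere system. -/
def Fm (α : ℝ) : Matrix (Fin 3) (Fin 3) ℝ := Real.cos α • J3

/-- The first control field `G₁ = sin α sin β · J₁`. -/
def G1m (α β : ℝ) : Matrix (Fin 3) (Fin 3) ℝ := (Real.sin α * Real.sin β) • J1

/-- The second control field `G₂ = sin α cos β · J₂`. -/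
def G2m (α β : ℝ) : Matrix (Fin 3) (Fin 3) ℝ := (Real.sin α * Real.cos β) • J2

/-- The maximal duration of the first bang arc. -/
def smax (α : ℝ) : ℝ := Real.arccos (-(Real.sin α)^2 / (1 + (Real.cos α)^2))

/-- The rotation angle produced by each bang of duration `smax`. -/
def θf (α : ℝ) : ℝ :=
  Real.arcsin (-2 * Real.sqrt 2 * Real.sin α * Real.cos α / (1 + (Real.cos α)^2))

/-- The monodromy matrix of one full four-bang cycle. -/
def Mbar (α : ℝ) : Matrix (Fin 3) (Fin 3) ℝ :=
  NormedSpace.exp (smax α • (Fm α + G1m α (π/4) + G2m α (π/4))) *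
  NormedSpace.exp (smax α • (Fm α - G1m α (π/4) + G2m α (π/4))) *
  NormedSpace.exp (smax α • (Fm α - G1m α (π/4) - G2m α (π/4))) *
  NormedSpace.exp (smax α • (Fm α + G1m α (π/4) - G2m α (π/4)))

attribute [local instance] Matrix.linftyOpNormedAddCommGroup Matrix.linftyOpNormedRing
  Matrix.linftyOpNormedAlgebra

/-! ### Rodrigues formula -/

lemma pow_odd_of_cube (A : Matrix (Fin 3) (Fin 3) ℝ) (hA : A ^ 3 = -A) (k : ℕ) :
    A ^ (2 * k + 1) = ((-1 : ℝ)) ^ k • A := by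
  induction k with
  | zero => simp
  | succ k ih =>
    have h1 : 2 * (k + 1) + 1 = (2 * k + 1) + 2 := by ring
    rw [h1, pow_add, ih, smul_mul_assoc]
    have h2 : A * A ^ 2 = A ^ 3 := (pow_succ' A 2).symm
    rw [h2, hA, pow_succ]
    simp [smul_smul, mul_comm]

lemma pow_even_of_cube (A : Matrix (Fin 3) (Fin 3) ℝ) (hA : A ^ 3 = -A) (k : ℕ) :
    A ^ (2 * k + 2) = ((-1 : ℝ)) ^ k • A ^ 2 := by
  have h1 : 2 * k + 2 = (2 * k + 1) + 1 := by ring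
  rw [h1, pow_succ, pow_odd_of_cube A hA, smul_mul_assoc, ← pow_two]

lemma exp_rodrigues (A : Matrix (Fin 3) (Fin 3) ℝ) (hA : A ^ 3 = -A) (t : ℝ) :
    NormedSpace.exp (t • A)
      = 1 + Real.sin t • A + (1 - Real.cos t) • A ^ 2 := by
  have hmain := NormedSpace.exp_series_hasSum_exp' (𝕂 := ℝ) (t • A)
  set f : ℕ → Matrix (Fin 3) (Fin 3) ℝ := fun n => ((n.factorial : ℝ))⁻¹ • (t • A) ^ n with hf
  have hodd : HasSum (fun k => f (2 * k + 1)) (Real.sin t • A) := by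
    have h := (Real.hasSum_sin t).smul_const A
    refine h.congr_fun fun k => ?_
    rw [hf]
    simp only [smul_pow, pow_odd_of_cube A hA, smul_smul]
    congr 1
    field_simp
  have heven : HasSum (fun k => f (2 * k)) ((1 : Matrix (Fin 3) (Fin 3) ℝ)
      + (1 - Real.cos t) • A ^ 2) := by
    have hc := (hasSum_nat_add_iff' (f := fun n => ((-1:ℝ)) ^ n * t ^ (2 * n) / ((2 * n).factorial))
        1).mpr (Real.hasSum_cos t)
    have hc' : HasSum (fun k : ℕ => -(((-1:ℝ)) ^ (k+1) * t ^ (2 * (k+1)) / ((2 * (k+1)).factorial)))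
        (1 - Real.cos t) := by
      have := hc.neg
      simpa using this.congr_fun fun k => rfl
    have h2 := hc'.smul_const (A ^ 2)
    have h3 : HasSum (fun k : ℕ => f (2 * (k + 1)))
        ((1 - Real.cos t) • A ^ 2) := by
      refine h2.congr_fun fun k => ?_
      rw [hf]
      have he : 2 * (k + 1) = 2 * k + 2 := by ring
      simp only [he, smul_pow, pow_even_of_cube A hA, smul_smul]
      congr 1
      have hneg : ((-1:ℝ)) ^ (k + 1) = -(-1:ℝ) ^ k := by rw [pow_succ]; ring
      rw [hneg]
      field_simp
    refine (hasSum_nat_add_iff' (f := fun k => f (2 * k))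
      (g := (1 : Matrix (Fin 3) (Fin 3) ℝ) + (1 - Real.cos t) • A ^ 2) 1).mp ?_
    simp only [Finset.range_one, Finset.sum_singleton]
    have hf0 : f (2 * 0) = 1 := by simp [hf]
    rw [hf0]
    have he2 : (1 : Matrix (Fin 3) (Fin 3) ℝ) + (1 - Real.cos t) • A ^ 2 - 1
        = (1 - Real.cos t) • A ^ 2 := by abel
    rw [he2]
    exact h3
  have htot := heven.even_add_odd hodd
  refine (hmain.unique htot).trans ?_
  abel

/-! ### The cross-product matrix -/

def Kv (a b c : ℝ) : Matrix (Fin 3) (Fin 3) ℝ := !![0,-c,-b; c,0,-a; b,a,0]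

lemma Kv_sq (a b c : ℝ) : (Kv a b c) ^ 2
    = !![-(c^2+b^2), -(a*b), a*c; -(a*b), -(a^2+c^2), -(b*c); a*c, -(b*c), -(a^2+b^2)] := by
  rw [pow_two]
  ext i j
  fin_cases i <;> fin_cases j <;>
    simp [Kv, Matrix.mul_apply, Fin.sum_univ_three] <;> ring

lemma Kv_cube {a b c : ℝ} (h : a^2 + b^2 + c^2 = 1) :
    (Kv a b c) ^ 3 = -(Kv a b c) := by
  have h3 : (Kv a b c) ^ 3 = (Kv a b c) ^ 2 * Kv a b c := by rw [pow_succ]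
  rw [h3, Kv_sq]
  ext i j
  fin_cases i <;> fin_cases j <;>
    simp [Kv, Matrix.mul_apply, Fin.sum_univ_three] <;>
    first
      | ring1
      | linear_combination a * h
      | linear_combination (-a) * h
      | linear_combination b * h
      | linear_combination (-b) * h
      | linear_combination c * h
      | linear_combination (-c) * h

/-! ### Trigonometric values -/

section Trig

variable {α : ℝ}

lemma cos_alpha_pos (h1 : 0 < α) (h2 : α < π/4) : 0 < Real.cos α := by
  apply Real.cos_pos_of_mem_Ioo
  constructor
  · linarith [Real.pi_pos]
  · linarith [Real.pi_pos]

lemma sin_alpha_pos (h1 : 0 < α) (h2 : α < π/4) : 0 < Real.sin α :=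
  Real.sin_pos_of_pos_of_lt_pi h1 (by linarith [Real.pi_pos])

lemma cos_sq_half (h1 : 0 < α) (h2 : α < π/4) : 1/2 < Real.cos α ^ 2 := by
  have hlt : Real.cos (π/4) < Real.cos α :=
    Real.cos_lt_cos_of_nonneg_of_le_pi (le_of_lt h1) (by linarith [Real.pi_pos]) h2
  rw [Real.cos_pi_div_four] at hlt
  have h0 : (0:ℝ) < Real.sqrt 2 / 2 := by positivity
  nlinarith [Real.sq_sqrt (by norm_num : (0:ℝ) ≤ 2)]

lemma hs2' : Real.sin α ^ 2 = 1 - Real.cos α ^ 2 := by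
  nlinarith [Real.sin_sq_add_cos_sq α]

lemma hd_pos : (0:ℝ) < 1 + Real.cos α ^ 2 := by positivity

lemma hr2' : Real.sqrt 2 ^ 2 = 2 := Real.sq_sqrt (by norm_num)

lemma cos_smax : Real.cos (smax α) = (Real.cos α ^ 2 - 1) / (1 + Real.cos α ^ 2) := by
  have hd : (0:ℝ) < 1 + Real.cos α ^ 2 := hd_pos
  have hs : Real.sin α ^ 2 = 1 - Real.cos α ^ 2 := hs2'
  rw [smax, Real.cos_arccos]
  · rw [hs]; ring
  · rw [neg_div, neg_le, neg_neg, div_le_one hd]; nlinarith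
  · exact le_trans (div_nonpos_of_nonpos_of_nonneg
      (neg_nonpos_of_nonneg (sq_nonneg _)) (le_of_lt hd)) (by norm_num)

lemma sin_smax (h1 : 0 < α) (h2 : α < π/4) :
    Real.sin (smax α) = 2 * Real.cos α / (1 + Real.cos α ^ 2) := by
  have hd : (0:ℝ) < 1 + Real.cos α ^ 2 := hd_pos
  have hs : Real.sin α ^ 2 = 1 - Real.cos α ^ 2 := hs2'
  have hc : 0 < Real.cos α := cos_alpha_pos h1 h2
  rw [smax, Real.sin_arccos]
  have key : 1 - (-(Real.sin α)^2 / (1 + Real.cos α ^ 2))^2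
      = (2 * Real.cos α / (1 + Real.cos α ^ 2))^2 := by
    rw [hs]
    field_simp
    ring
  rw [key, Real.sqrt_sq (by positivity)]

lemma eight_sq (h1 : 0 < α) (h2 : α < π/4) :
    (-2 * Real.sqrt 2 * Real.sin α * Real.cos α)^2
      = 8 * (1 - Real.cos α ^ 2) * Real.cos α ^ 2 := by
  have hs : Real.sin α ^ 2 = 1 - Real.cos α ^ 2 := hs2'
  have hr : Real.sqrt 2 ^ 2 = 2 := hr2'
  rw [mul_pow, mul_pow, mul_pow, hr, hs]
  ring

lemma two_sqrt_two_bound (h1 : 0 < α) (h2 : α < π/4) :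
    2 * Real.sqrt 2 * Real.sin α * Real.cos α ≤ 1 + Real.cos α ^ 2 := by
  have hd : (0:ℝ) < 1 + Real.cos α ^ 2 := hd_pos
  have h8 := eight_sq h1 h2
  have hsq : (2 * Real.sqrt 2 * Real.sin α * Real.cos α)^2
      = 8 * (1 - Real.cos α ^ 2) * Real.cos α ^ 2 := by
    rw [← h8]; ring
  nlinarith [sq_nonneg (3 * Real.cos α ^ 2 - 1), hsq,
    sq_nonneg (2 * Real.sqrt 2 * Real.sin α * Real.cos α - (1 + Real.cos α ^ 2))]

lemma sin_thetaf (h1 : 0 < α) (h2 : α < π/4) :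
    Real.sin (θf α) = -2 * Real.sqrt 2 * Real.sin α * Real.cos α / (1 + Real.cos α ^ 2) := by
  have hd : (0:ℝ) < 1 + Real.cos α ^ 2 := hd_pos
  have hb := two_sqrt_two_bound h1 h2
  have hc : 0 < Real.cos α := cos_alpha_pos h1 h2
  have hsp : 0 < Real.sin α := sin_alpha_pos h1 h2
  have hrp : (0:ℝ) < Real.sqrt 2 := Real.sqrt_pos.mpr (by norm_num)
  rw [θf, Real.sin_arcsin]
  · rw [le_div_iff₀ hd]
    nlinarith
  · rw [div_le_iff₀ hd]
    nlinarith [mul_pos (mul_pos hrp hsp) hc]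

lemma cos_thetaf (h1 : 0 < α) (h2 : α < π/4) :
    Real.cos (θf α) = (3 * Real.cos α ^ 2 - 1) / (1 + Real.cos α ^ 2) := by
  have hd : (0:ℝ) < 1 + Real.cos α ^ 2 := hd_pos
  have hc : 0 < Real.cos α := cos_alpha_pos h1 h2
  have hch : 1/2 < Real.cos α ^ 2 := cos_sq_half h1 h2
  rw [θf, Real.cos_arcsin]
  have key : 1 - (-2 * Real.sqrt 2 * Real.sin α * Real.cos α / (1 + Real.cos α ^ 2))^2
      = ((3 * Real.cos α ^ 2 - 1) / (1 + Real.cos α ^ 2))^2 := by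
    rw [div_pow, eight_sq h1 h2]
    field_simp
    ring
  rw [key, Real.sqrt_sq (div_nonneg (by nlinarith) (le_of_lt hd))]

end Trig

/-! ### Explicit exponentials of the bang fields -/

lemma exp_bang {α : ℝ} (h1 : 0 < α) (h2 : α < π/4) (a b : ℝ)
    (hab : a^2 + b^2 + Real.cos α^2 = 1) :
    NormedSpace.exp (smax α • Kv a b (Real.cos α)) =
      (1/(1 + Real.cos α^2)) •
        !![a^2-b^2, -2*Real.cos α^2-2*a*b, 2*Real.cos α*(a-b);
           2*Real.cos α^2-2*a*b, b^2-a^2, -(2*Real.cos α*(a+b));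
           2*Real.cos α*(a+b), 2*Real.cos α*(a-b), 3*Real.cos α^2-1] := by
  have hd : (0:ℝ) < 1 + Real.cos α ^ 2 := hd_pos
  have hd' : (1 + Real.cos α^2) ≠ 0 := ne_of_gt hd
  rw [exp_rodrigues _ (Kv_cube hab), sin_smax h1 h2, cos_smax, Kv_sq]
  ext i j
  fin_cases i <;> fin_cases j <;>
    simp [Kv, Matrix.add_apply, Matrix.smul_apply, Matrix.one_apply, smul_eq_mul] <;>
    field_simp <;>
    first
      | ring1
      | linear_combination hab
      | linear_combination (-1 : ℝ) * hab
      | linear_combination 2 * hab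
      | linear_combination (-2 : ℝ) * hab
      | linear_combination (1 + Real.cos α^2) * hab
      | linear_combination (-(1 + Real.cos α^2)) * hab
      | linear_combination (2*(1 + Real.cos α^2)) * hab
      | linear_combination (-2*(1 + Real.cos α^2)) * hab

lemma X1_eq (α : ℝ) : Fm α + G1m α (π/4) + G2m α (π/4)
    = Kv (Real.sin α * (Real.sqrt 2/2)) (Real.sin α * (Real.sqrt 2/2)) (Real.cos α) := by
  unfold Fm G1m G2m
  rw [Real.sin_pi_div_four, Real.cos_pi_div_four]
  ext i j
  fin_cases i <;> fin_cases j <;>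
    simp [Kv, J1, J2, J3, Matrix.add_apply, Matrix.smul_apply, Matrix.vecHead, Matrix.vecTail] <;> ring

lemma X2_eq (α : ℝ) : Fm α - G1m α (π/4) + G2m α (π/4)
    = Kv (-(Real.sin α * (Real.sqrt 2/2))) (Real.sin α * (Real.sqrt 2/2)) (Real.cos α) := by
  unfold Fm G1m G2m
  rw [Real.sin_pi_div_four, Real.cos_pi_div_four]
  ext i j
  fin_cases i <;> fin_cases j <;>
    simp [Kv, J1, J2, J3, Matrix.add_apply, Matrix.sub_apply, Matrix.smul_apply, Matrix.vecHead, Matrix.vecTail] <;> ring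

lemma X3_eq (α : ℝ) : Fm α - G1m α (π/4) - G2m α (π/4)
    = Kv (-(Real.sin α * (Real.sqrt 2/2))) (-(Real.sin α * (Real.sqrt 2/2))) (Real.cos α) := by
  unfold Fm G1m G2m
  rw [Real.sin_pi_div_four, Real.cos_pi_div_four]
  ext i j
  fin_cases i <;> fin_cases j <;>
    simp [Kv, J1, J2, J3, Matrix.add_apply, Matrix.sub_apply, Matrix.smul_apply, Matrix.vecHead, Matrix.vecTail] <;> ring

lemma X4_eq (α : ℝ) : Fm α + G1m α (π/4) - G2m α (π/4)
    = Kv (Real.sin α * (Real.sqrt 2/2)) (-(Real.sin α * (Real.sqrt 2/2))) (Real.cos α) := by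
  unfold Fm G1m G2m
  rw [Real.sin_pi_div_four, Real.cos_pi_div_four]
  ext i j
  fin_cases i <;> fin_cases j <;>
    simp [Kv, J1, J2, J3, Matrix.add_apply, Matrix.sub_apply, Matrix.smul_apply, Matrix.vecHead, Matrix.vecTail] <;> ring

lemma hab_gen {α : ℝ} (u v : ℝ) (hu : u = 1 ∨ u = -1) (hv : v = 1 ∨ v = -1) :
    (u * (Real.sin α * (Real.sqrt 2/2)))^2 + (v * (Real.sin α * (Real.sqrt 2/2)))^2
      + Real.cos α^2 = 1 := by
  have hr : Real.sqrt 2 ^ 2 = 2 := hr2'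
  have hs : Real.sin α ^ 2 = 1 - Real.cos α ^ 2 := hs2'
  have hu2 : u^2 = 1 := by rcases hu with h | h <;> rw [h] <;> norm_num
  have hv2 : v^2 = 1 := by rcases hv with h | h <;> rw [h] <;> norm_num
  have expand : (u * (Real.sin α * (Real.sqrt 2/2)))^2 = u^2 * (Real.sin α^2 * (Real.sqrt 2^2/4)) := by ring
  have expand2 : (v * (Real.sin α * (Real.sqrt 2/2)))^2 = v^2 * (Real.sin α^2 * (Real.sqrt 2^2/4)) := by ring
  rw [expand, expand2, hu2, hv2, hr, hs]
  ring

lemma expD1 {α : ℝ} (h1 : 0 < α) (h2 : α < π/4) :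
    NormedSpace.exp (smax α • (Fm α + G1m α (π/4) + G2m α (π/4)))
      = (1/(1 + Real.cos α^2)) •
        !![0, -(1 + Real.cos α^2), 0;
           3*Real.cos α^2 - 1, 0, -(2*Real.sqrt 2*Real.sin α*Real.cos α);
           2*Real.sqrt 2*Real.sin α*Real.cos α, 0, 3*Real.cos α^2 - 1] := by
  have hab := hab_gen (α := α) 1 1 (Or.inl rfl) (Or.inl rfl)
  simp only [one_mul] at hab
  have hr : Real.sqrt 2 ^ 2 = 2 := hr2'
  have hs : Real.sin α ^ 2 = 1 - Real.cos α ^ 2 := hs2'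
  rw [X1_eq, exp_bang h1 h2 _ _ hab]
  congr 1
  ext i j
  fin_cases i <;> fin_cases j <;> simp <;>
    first
      | ring1
      | linear_combination (Real.sin α^2/2) * hr + hs
      | linear_combination (-(Real.sin α^2/2)) * hr - hs

lemma expD2 {α : ℝ} (h1 : 0 < α) (h2 : α < π/4) :
    NormedSpace.exp (smax α • (Fm α - G1m α (π/4) + G2m α (π/4)))
      = (1/(1 + Real.cos α^2)) •
        !![0, -(3*Real.cos α^2 - 1), -(2*Real.sqrt 2*Real.sin α*Real.cos α);
           1 + Real.cos α^2, 0, 0;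
           0, -(2*Real.sqrt 2*Real.sin α*Real.cos α), 3*Real.cos α^2 - 1] := by
  have hab := hab_gen (α := α) (-1) 1 (Or.inr rfl) (Or.inl rfl)
  have hab' : (-(Real.sin α * (Real.sqrt 2/2)))^2 + (Real.sin α * (Real.sqrt 2/2))^2
      + Real.cos α^2 = 1 := by linear_combination hab
  have hr : Real.sqrt 2 ^ 2 = 2 := hr2'
  have hs : Real.sin α ^ 2 = 1 - Real.cos α ^ 2 := hs2'
  rw [X2_eq, exp_bang h1 h2 _ _ hab']
  congr 1
  ext i j
  fin_cases i <;> fin_cases j <;> simp <;>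
    first
      | ring1
      | linear_combination (Real.sin α^2/2) * hr + hs
      | linear_combination (-(Real.sin α^2/2)) * hr - hs

lemma expD3 {α : ℝ} (h1 : 0 < α) (h2 : α < π/4) :
    NormedSpace.exp (smax α • (Fm α - G1m α (π/4) - G2m α (π/4)))
      = (1/(1 + Real.cos α^2)) •
        !![0, -(1 + Real.cos α^2), 0;
           3*Real.cos α^2 - 1, 0, 2*Real.sqrt 2*Real.sin α*Real.cos α;
           -(2*Real.sqrt 2*Real.sin α*Real.cos α), 0, 3*Real.cos α^2 - 1] := by
  have hab := hab_gen (α := α) (-1) (-1) (Or.inr rfl) (Or.inr rfl)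
  have hab' : (-(Real.sin α * (Real.sqrt 2/2)))^2 + (-(Real.sin α * (Real.sqrt 2/2)))^2
      + Real.cos α^2 = 1 := by linear_combination hab
  have hr : Real.sqrt 2 ^ 2 = 2 := hr2'
  have hs : Real.sin α ^ 2 = 1 - Real.cos α ^ 2 := hs2'
  rw [X3_eq, exp_bang h1 h2 _ _ hab']
  congr 1
  ext i j
  fin_cases i <;> fin_cases j <;> simp <;>
    first
      | ring1
      | linear_combination (Real.sin α^2/2) * hr + hs
      | linear_combination (-(Real.sin α^2/2)) * hr - hs

lemma expD4 {α : ℝ} (h1 : 0 < α) (h2 : α < π/4) :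
    NormedSpace.exp (smax α • (Fm α + G1m α (π/4) - G2m α (π/4)))
      = (1/(1 + Real.cos α^2)) •
        !![0, -(3*Real.cos α^2 - 1), 2*Real.sqrt 2*Real.sin α*Real.cos α;
           1 + Real.cos α^2, 0, 0;
           0, 2*Real.sqrt 2*Real.sin α*Real.cos α, 3*Real.cos α^2 - 1] := by
  have hab := hab_gen (α := α) 1 (-1) (Or.inl rfl) (Or.inr rfl)
  have hab' : (Real.sin α * (Real.sqrt 2/2))^2 + (-(Real.sin α * (Real.sqrt 2/2)))^2
      + Real.cos α^2 = 1 := by linear_combination hab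
  have hr : Real.sqrt 2 ^ 2 = 2 := hr2'
  have hs : Real.sin α ^ 2 = 1 - Real.cos α ^ 2 := hs2'
  rw [X4_eq, exp_bang h1 h2 _ _ hab']
  congr 1
  ext i j
  fin_cases i <;> fin_cases j <;> simp <;>
    first
      | ring1
      | linear_combination (Real.sin α^2/2) * hr + hs
      | linear_combination (-(Real.sin α^2/2)) * hr - hs

/-! ### Scalar identities for the fourfold angle -/

section Final

variable {α : ℝ}

lemma huc' (h1 : 0 < α) (h2 : α < π/4) :
    (1 + Real.cos α^2) * Real.cos (θf α) = 3*Real.cos α^2 - 1 := by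
  have hd : (0:ℝ) < 1 + Real.cos α ^ 2 := hd_pos
  rw [cos_thetaf h1 h2, mul_comm, div_mul_cancel₀ _ (ne_of_gt hd)]

lemma hus' (h1 : 0 < α) (h2 : α < π/4) :
    (1 + Real.cos α^2) * Real.sin (θf α) = -(2*Real.sqrt 2*Real.sin α*Real.cos α) := by
  have hd : (0:ℝ) < 1 + Real.cos α ^ 2 := hd_pos
  rw [sin_thetaf h1 h2, mul_comm, div_mul_cancel₀ _ (ne_of_gt hd)]
  ring

lemma hGM' : (1 + Real.cos α^2)^2
    = (3*Real.cos α^2 - 1)^2 + (2*Real.sqrt 2*Real.sin α*Real.cos α)^2 := by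
  have hr : Real.sqrt 2 ^ 2 = 2 := hr2'
  have hs : Real.sin α ^ 2 = 1 - Real.cos α ^ 2 := hs2' (α := α)
  linear_combination (-(4*Real.sin α^2*Real.cos α^2)) * hr + (-(8*Real.cos α^2)) * hs

lemma hcos4' (h1 : 0 < α) (h2 : α < π/4) :
    (1 + Real.cos α^2)^4 * Real.cos (4*θf α)
      = ((2*Real.sqrt 2*Real.sin α*Real.cos α)^2 - (3*Real.cos α^2 - 1)^2)^2
        - 4*(2*Real.sqrt 2*Real.sin α*Real.cos α)^2*(3*Real.cos α^2 - 1)^2 := by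
  have e : Real.cos (4*θf α) = 2*(2*Real.cos (θf α)^2 - 1)^2 - 1 := by
    rw [show (4:ℝ)*θf α = 2*(2*θf α) by ring, Real.cos_two_mul, Real.cos_two_mul]
  have step : (1 + Real.cos α^2)^4 * Real.cos (4*θf α)
      = 2*(2*((1 + Real.cos α^2) * Real.cos (θf α))^2 - (1 + Real.cos α^2)^2)^2
        - (1 + Real.cos α^2)^4 := by rw [e]; ring
  rw [step, huc' h1 h2]
  linear_combination ((1 + Real.cos α^2)^2 + (3*Real.cos α^2 - 1)^2
    + (2*Real.sqrt 2*Real.sin α*Real.cos α)^2 - 8*(3*Real.cos α^2 - 1)^2) * hGM' (α := α)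

lemma hsin4' (h1 : 0 < α) (h2 : α < π/4) :
    (1 + Real.cos α^2)^4 * Real.sin (4*θf α)
      = 4*(2*Real.sqrt 2*Real.sin α*Real.cos α)*(3*Real.cos α^2 - 1)
        *((2*Real.sqrt 2*Real.sin α*Real.cos α)^2 - (3*Real.cos α^2 - 1)^2) := by
  have e : Real.sin (4*θf α)
      = 2*(2*Real.sin (θf α)*Real.cos (θf α))*(2*Real.cos (θf α)^2 - 1) := by
    rw [show (4:ℝ)*θf α = 2*(2*θf α) by ring, Real.sin_two_mul, Real.sin_two_mul,
      Real.cos_two_mul]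
  have step : (1 + Real.cos α^2)^4 * Real.sin (4*θf α)
      = 4*((1 + Real.cos α^2)*Real.sin (θf α))*((1 + Real.cos α^2)*Real.cos (θf α))
        *(2*((1 + Real.cos α^2)*Real.cos (θf α))^2 - (1 + Real.cos α^2)^2) := by
    rw [e]; ring
  rw [step, hus' h1 h2, huc' h1 h2]
  linear_combination (4*(2*Real.sqrt 2*Real.sin α*Real.cos α)*(3*Real.cos α^2 - 1)) * hGM' (α := α)

/-! ### Rotation matrices about the x₁ axis -/

def Rot (x : ℝ) : Matrix (Fin 3) (Fin 3) ℝ :=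
  !![1,0,0; 0,Real.cos x,Real.sin x; 0,-Real.sin x,Real.cos x]

lemma Rot_mul (x y : ℝ) : Rot x * Rot y = Rot (x + y) := by
  ext i j
  fin_cases i <;> fin_cases j <;>
    simp [Rot, Matrix.mul_apply, Fin.sum_univ_three, Real.cos_add, Real.sin_add,
      Matrix.vecHead, Matrix.vecTail] <;> ring

lemma Rot_zero : Rot 0 = 1 := by
  ext i j
  fin_cases i <;> fin_cases j <;> simp [Rot, Matrix.one_apply, Matrix.vecHead, Matrix.vecTail]

lemma Rot_pow (x : ℝ) (n : ℕ) : Rot x ^ n = Rot (n * x) := by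
  induction n with
  | zero => simp [Rot_zero]
  | succ n ih =>
    rw [pow_succ, ih, Rot_mul]
    congr 1
    push_cast
    ring

/-! ### The monodromy matrix is a rotation about the x₁ axis -/

lemma Mbar_eq (h1 : 0 < α) (h2 : α < π/4) : Mbar α = Rot (4 * θf α) := by
  have hd : (0:ℝ) < 1 + Real.cos α ^ 2 := hd_pos
  have hd' : (1 + Real.cos α^2) ≠ 0 := ne_of_gt hd
  have hc4 := hcos4' h1 h2
  have hs4 := hsin4' h1 h2
  have hP1 : (!![0, -(1 + Real.cos α^2), 0; 3*Real.cos α^2 - 1, 0, -(2*Real.sqrt 2*Real.sin α*Real.cos α); 2*Real.sqrt 2*Real.sin α*Real.cos α, 0, 3*Real.cos α^2 - 1] : Matrix (Fin 3) (Fin 3) ℝ) * !![0, -(3*Real.cos α^2 - 1), -(2*Real.sqrt 2*Real.sin α*Real.cos α); 1 + Real.cos α^2, 0, 0; 0, -(2*Real.sqrt 2*Real.sin α*Real.cos α), 3*Real.cos α^2 - 1] = !![-((1 + Real.cos α^2)^2), 0, 0; 0, (2*Real.sqrt 2*Real.sin α*Real.cos α)^2 - (3*Real.cos α^2 - 1)^2,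 -(2*(2*Real.sqrt 2*Real.sin α*Real.cos α)*(3*Real.cos α^2 - 1)); 0, -(2*(2*Real.sqrt 2*Real.sin α*Real.cos α)*(3*Real.cos α^2 - 1)), (3*Real.cos α^2 - 1)^2 - (2*Real.sqrt 2*Real.sin α*Real.cos α)^2] := by
    rw [Matrix.mul_fin_three]; congr 1 <;> ring
  have hP2 : (!![0, -(1 + Real.cos α^2), 0; 3*Real.cos α^2 - 1, 0, 2*Real.sqrt 2*Real.sin α*Real.cos α; -(2*Real.sqrt 2*Real.sin α*Real.cos α), 0, 3*Real.cos α^2 - 1] : Matrix (Fin 3) (Fin 3) ℝ) * !![0, -(3*Real.cos α^2 - 1), 2*Real.sqrt 2*Real.sin α*Real.cos α; 1 + Real.cos α^2, 0, 0; 0, 2*Real.sqrt 2*Real.sin α*Real.cos α, 3*Real.cos α^2 - 1] = !![-((1 + Real.cos α^2)^2), 0, 0; 0, (2*Real.sqrt 2*Real.sin α*Real.cos α)^2 - (3*Real.cos α^2 - 1)^2, 2*(2*Real.sqrt 2*Real.sin α*Real.cos α)*(3*Real.cos α^2 - 1); 0, 2*(2*Real.sqrt 2*Real.sin α*Real.cos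 α)*(3*Real.cos α^2 - 1), (3*Real.cos α^2 - 1)^2 - (2*Real.sqrt 2*Real.sin α*Real.cos α)^2] := by
    rw [Matrix.mul_fin_three]; congr 1 <;> ring
  have hQ : (!![-((1 + Real.cos α^2)^2), 0, 0; 0, (2*Real.sqrt 2*Real.sin α*Real.cos α)^2 - (3*Real.cos α^2 - 1)^2, -(2*(2*Real.sqrt 2*Real.sin α*Real.cos α)*(3*Real.cos α^2 - 1)); 0, -(2*(2*Real.sqrt 2*Real.sin α*Real.cos α)*(3*Real.cos α^2 - 1)), (3*Real.cos α^2 - 1)^2 - (2*Real.sqrt 2*Real.sin α*Real.cos α)^2] : Matrix (Fin 3) (Fin 3) ℝ) * !![-((1 + Real.cos α^2)^2), 0, 0; 0, (2*Real.sqrt 2*Real.sin α*Real.cos α)^2 - (3*Real.cos α^2 - 1)^2, 2*(2*Real.sqrt 2*Real.sin α*Real.cos α)*(3*Real.cos α^2 - 1); 0, 2*(2*Real.sqrt 2*Real.sin α*Real.cos α)*(3*Real.cos α^2 - 1), (3*Real.cos α^2 - 1)^2 - (2*Real.sqrt 2*Real.sin α*Real.cos α)^2] = !![(1 + Real.cos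 α^2)^4, 0, 0;
           0, ((2*Real.sqrt 2*Real.sin α*Real.cos α)^2-(3*Real.cos α^2 - 1)^2)^2 - 4*(2*Real.sqrt 2*Real.sin α*Real.cos α)^2*(3*Real.cos α^2 - 1)^2, 4*(2*Real.sqrt 2*Real.sin α*Real.cos α)*(3*Real.cos α^2 - 1)*((2*Real.sqrt 2*Real.sin α*Real.cos α)^2-(3*Real.cos α^2 - 1)^2);
           0, -(4*(2*Real.sqrt 2*Real.sin α*Real.cos α)*(3*Real.cos α^2 - 1)*((2*Real.sqrt 2*Real.sin α*Real.cos α)^2-(3*Real.cos α^2 - 1)^2)), ((2*Real.sqrt 2*Real.sin α*Real.cos α)^2-(3*Real.cos α^2 - 1)^2)^2 - 4*(2*Real.sqrt 2*Real.sin α*Real.cos α)^2*(3*Real.cos α^2 - 1)^2] := by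
    rw [Matrix.mul_fin_three]; congr 1 <;> ring
  rw [Mbar, expD1 h1 h2, expD2 h1 h2, expD3 h1 h2, expD4 h1 h2]
  simp only [Matrix.smul_mul, Matrix.mul_smul, smul_smul]
  rw [mul_assoc, hP1, hP2, hQ]
  ext i j
  fin_cases i <;> fin_cases j <;>
    simp [Rot, Matrix.smul_apply, smul_eq_mul, Matrix.vecHead, Matrix.vecTail] <;>
    field_simp <;>
    first
      | ring1
      | linear_combination hc4
      | linear_combination (-1 : ℝ) * hc4
      | linear_combination hs4
      | linear_combination (-1 : ℝ) * hs4
      | linear_combination (1+Real.cos α^2)^4 * hc4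
      | linear_combination (-(1+Real.cos α^2)^4) * hc4
      | linear_combination (1+Real.cos α^2)^4 * hs4
      | linear_combination (-(1+Real.cos α^2)^4) * hs4

end Final

lemma expN (h1 : 0 < α) (h2 : α < π/4) :
    (NormedSpace.exp (smax α • (Fm α + G1m α (π/4) + G2m α (π/4)))).mulVec ![0,0,1]
      = ![0, Real.sin (θf α), Real.cos (θf α)] := by
  have hd : (0:ℝ) < 1 + Real.cos α ^ 2 := hd_pos
  have hd' : (1 + Real.cos α^2) ≠ 0 := ne_of_gt hd
  have hu := huc' h1 h2
  have hv := hus' h1 h2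
  rw [expD1 h1 h2]
  ext i
  fin_cases i <;>
    simp [Matrix.mulVec, dotProduct, Fin.sum_univ_three, Matrix.smul_apply,
      smul_eq_mul, Matrix.vecHead, Matrix.vecTail] <;>
    field_simp <;>
    first
      | ring1
      | linear_combination hu
      | linear_combination (-1 : ℝ) * hu
      | linear_combination hv
      | linear_combination (-1 : ℝ) * hv

lemma Rot_mulVec_N (x : ℝ) : (Rot x).mulVec ![0,0,1] = ![0, Real.sin x, Real.cos x] := by
  ext i
  fin_cases i <;>
    simp [Rot, Matrix.mulVec, dotProduct, Fin.sum_univ_three,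
      Matrix.vecHead, Matrix.vecTail]

lemma Rot_mulVec_sc (x y : ℝ) :
    (Rot x).mulVec ![0, Real.sin y, Real.cos y] = ![0, Real.sin (x+y), Real.cos (x+y)] := by
  ext i
  fin_cases i <;>
    simp [Rot, Matrix.mulVec, dotProduct, Fin.sum_univ_three,
      Matrix.vecHead, Matrix.vecTail, Real.sin_add, Real.cos_add] <;>
    ring

theorem cycle_endpoints_on_great_circle
    (α : ℝ) (hα : 0 < α) (hα' : α < π/4) (n : ℕ) :
    ((Mbar α)^n).mulVec ![0,0,1]
      = ![0, Real.sin (4 * n * θf α), Real.cos (4 * n * θf α)] ∧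
    ((Mbar α)^n).mulVec
        ((NormedSpace.exp (smax α • (Fm α + G1m α (π/4) + G2m α (π/4)))).mulVec ![0,0,1])
      = ![0, Real.sin ((4 * n + 1) * θf α), Real.cos ((4 * n + 1) * θf α)] := by
  have hp : (Mbar α)^n = Rot (4 * n * θf α) := by
    rw [Mbar_eq hα hα', Rot_pow]
    congr 1
    push_cast
    ring
  constructor
  · rw [hp, Rot_mulVec_N]
  · rw [hp, expN hα hα', Rot_mulVec_sc]
    congr 2 <;> (push_cast; ring)
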